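/- If w ∈ ℝ^3 \ {0} satisfies E(p+w) = E(p) + E(w) with p ≠ 0, then the angle θ between w and p satisfies sin^2 θ ≥ (2κ2|p|^2 + κ2|w|^2)/(κ1 + 2κ2|p|^2 + 2κ2|w|^2). -/

import Mathlib

noncomputable def Edisp (κ1 κ2 : ℝ) (p : EuclideanSpace ℝ (Fin 3)) : ℝ :=
  Real.sqrt (κ1 * ‖p‖ ^ 2 + κ2 * ‖p‖ ^ 4)

/-! Write `x = |p|²`, `y = |w|²`, `s = ⟨w, p⟩` and `A = κ1 + 2κ2 (x + y)`. Squaring the resonance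
condition turns it into `A s + κ2 x y + 2κ2 s² = E(p) E(w)`. Cauchy–Schwarz gives
`|s| ≤ (x + y) / 2`, so `A + 2κ2 s > 0` and hence `s ≥ 0`. Dropping `2κ2 s²` and squaring, with
`E(p) E(w) ≥ κ2 x y`, yields `A² s² ≤ κ1 x y (κ1 + κ2 (x + y)) ≤ A x y (κ1 + κ2 y)`, that is
`cos² θ = s² / (x y) ≤ (κ1 + κ2 y) / A`. -/

open RealInnerProductSpace

section Resonance

variable {κ1 κ2 x y s P : ℝ}

lemma mul_mul_le_of_sq_eq (hκ1 : 0 ≤ κ1) (hκ2 : 0 ≤ κ2) (hx : 0 ≤ x) (hy : 0 ≤ y) (hP : 0 ≤ P)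
    (hP2 : P ^ 2 = (κ1 * x + κ2 * x ^ 2) * (κ1 * y + κ2 * y ^ 2)) :
    κ2 * x * y ≤ P := by
  refine (pow_le_pow_iff_left₀ (by positivity) hP two_ne_zero).mp ?_
  rw [hP2]
  nlinarith [mul_nonneg (mul_nonneg hκ1 hκ1) (mul_nonneg hx hy),
    mul_nonneg (mul_nonneg hκ1 hκ2) (mul_nonneg (mul_nonneg hx hy) (add_nonneg hx hy))]

lemma resonance_inner_nonneg (hκ1 : 0 < κ1) (hκ2 : 0 ≤ κ2) (hx : 0 ≤ x) (hy : 0 ≤ y)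
    (hs : s ^ 2 ≤ x * y) (hP : κ2 * x * y ≤ P)
    (hres : (κ1 + 2 * κ2 * x + 2 * κ2 * y) * s + κ2 * x * y + 2 * κ2 * s ^ 2 = P) :
    0 ≤ s := by
  have hs_ge : -((x + y) / 2) ≤ s :=
    (abs_le_of_sq_le_sq' (by nlinarith [sq_nonneg (x - y)]) (by positivity)).1
  have hfactor_pos : 0 < κ1 + 2 * κ2 * x + 2 * κ2 * y + 2 * κ2 * s := by nlinarith
  refine nonneg_of_mul_nonneg_left ?_ hfactor_pos
  linear_combination hP - hres

lemma mul_sq_le_of_resonance (hκ1 : 0 < κ1) (hκ2 : 0 ≤ κ2) (hx : 0 ≤ x) (hy : 0 ≤ y)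
    (hs : s ^ 2 ≤ x * y) (hP : 0 ≤ P)
    (hP2 : P ^ 2 = (κ1 * x + κ2 * x ^ 2) * (κ1 * y + κ2 * y ^ 2))
    (hres : (κ1 + 2 * κ2 * x + 2 * κ2 * y) * s + κ2 * x * y + 2 * κ2 * s ^ 2 = P) :
    (κ1 + 2 * κ2 * x + 2 * κ2 * y) * s ^ 2 ≤ x * y * (κ1 + κ2 * y) := by
  set A := κ1 + 2 * κ2 * x + 2 * κ2 * y
  have hA : 0 < A := by positivity
  have hPxy := mul_mul_le_of_sq_eq hκ1.le hκ2 hx hy hP hP2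
  have hs_nonneg := resonance_inner_nonneg hκ1 hκ2 hx hy hs hPxy hres
  have hAs : A * s ≤ P - κ2 * x * y := by nlinarith [mul_nonneg hκ2 (sq_nonneg s)]
  have hsq : (A * s) ^ 2 ≤ κ1 * x * y * (κ1 + κ2 * x + κ2 * y) :=
    calc (A * s) ^ 2 ≤ (P - κ2 * x * y) ^ 2 := pow_le_pow_left₀ (by positivity) hAs 2
      _ ≤ P ^ 2 - (κ2 * x * y) ^ 2 := by nlinarith [mul_nonneg hκ2 (mul_nonneg hx hy)]
      _ = κ1 * x * y * (κ1 + κ2 * x + κ2 * y) := by rw [hP2]; ring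
  refine le_of_mul_le_mul_left ?_ hA
  calc A * (A * s ^ 2) = (A * s) ^ 2 := by ring
    _ ≤ κ1 * x * y * (κ1 + κ2 * x + κ2 * y) := hsq
    _ ≤ A * (x * y * (κ1 + κ2 * y)) := by
      have : 0 ≤ κ2 * x * y * (κ1 * x + 2 * κ1 * y + 2 * κ2 * x * y + 2 * κ2 * y ^ 2) := by
        positivity
      linear_combination this

lemma div_le_one_sub_div_of_mul_sq_le (hκ1 : 0 < κ1) (hκ2 : 0 ≤ κ2) (hx : 0 ≤ x) (hy : 0 ≤ y)
    (h : (κ1 + 2 * κ2 * x + 2 * κ2 * y) * s ^ 2 ≤ x * y * (κ1 + κ2 * y)) :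
    (2 * κ2 * x + κ2 * y) / (κ1 + 2 * κ2 * x + 2 * κ2 * y) ≤ 1 - s ^ 2 / (x * y) := by
  have hA : 0 < κ1 + 2 * κ2 * x + 2 * κ2 * y := by positivity
  have hcos : s ^ 2 / (x * y) ≤ (κ1 + κ2 * y) / (κ1 + 2 * κ2 * x + 2 * κ2 * y) := by
    refine div_le_of_le_mul₀ (by positivity) (by positivity) ?_
    rw [div_mul_eq_mul_div, le_div_iff₀ hA]
    linarith
  have hsin : 1 - (κ1 + κ2 * y) / (κ1 + 2 * κ2 * x + 2 * κ2 * y) =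
      (2 * κ2 * x + κ2 * y) / (κ1 + 2 * κ2 * x + 2 * κ2 * y) := by
    field_simp
    ring
  linarith

end Resonance

section Edisp

variable {κ1 κ2 : ℝ} {p w : EuclideanSpace ℝ (Fin 3)}

lemma Edisp_nonneg : 0 ≤ Edisp κ1 κ2 p := Real.sqrt_nonneg _

lemma Edisp_sq (hκ1 : 0 ≤ κ1) (hκ2 : 0 ≤ κ2) :
    Edisp κ1 κ2 p ^ 2 = κ1 * ‖p‖ ^ 2 + κ2 * (‖p‖ ^ 2) ^ 2 := by
  rw [Edisp, Real.sq_sqrt (by positivity)]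
  ring

lemma Edisp_mul_Edisp_of_add_eq (hκ1 : 0 ≤ κ1) (hκ2 : 0 ≤ κ2)
    (h : Edisp κ1 κ2 (p + w) = Edisp κ1 κ2 p + Edisp κ1 κ2 w) :
    (κ1 + 2 * κ2 * ‖p‖ ^ 2 + 2 * κ2 * ‖w‖ ^ 2) * ⟪w, p⟫ + κ2 * ‖p‖ ^ 2 * ‖w‖ ^ 2
      + 2 * κ2 * ⟪w, p⟫ ^ 2 = Edisp κ1 κ2 p * Edisp κ1 κ2 w := by
  have hsq := congrArg (· ^ 2) h
  simp only [add_sq (Edisp κ1 κ2 p), Edisp_sq hκ1 hκ2, norm_add_sq_real, real_inner_comm w p]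
    at hsq
  linear_combination hsq / 2

end Edisp

theorem resonance_sin_sq_bound_general (κ1 κ2 : ℝ) (hκ1 : 0 < κ1) (hκ2 : 0 < κ2)
    (p w : EuclideanSpace ℝ (Fin 3))
    (hres : Edisp κ1 κ2 (p + w) = Edisp κ1 κ2 p + Edisp κ1 κ2 w) :
    (2 * κ2 * ‖p‖ ^ 2 + κ2 * ‖w‖ ^ 2) /
        (κ1 + 2 * κ2 * ‖p‖ ^ 2 + 2 * κ2 * ‖w‖ ^ 2) ≤
      1 - ((inner ℝ w p : ℝ) / (‖w‖ * ‖p‖)) ^ 2 := by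
  have hcs : ⟪w, p⟫ ^ 2 ≤ ‖p‖ ^ 2 * ‖w‖ ^ 2 := by
    rw [← mul_pow, mul_comm]
    exact sq_le_sq' (neg_le_of_abs_le (abs_real_inner_le_norm w p)) (real_inner_le_norm w p)
  have hprod : (Edisp κ1 κ2 p * Edisp κ1 κ2 w) ^ 2 =
      (κ1 * ‖p‖ ^ 2 + κ2 * (‖p‖ ^ 2) ^ 2) * (κ1 * ‖w‖ ^ 2 + κ2 * (‖w‖ ^ 2) ^ 2) := by
    rw [mul_pow, Edisp_sq hκ1.le hκ2.le, Edisp_sq hκ1.le hκ2.le]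
  have hcos := mul_sq_le_of_resonance hκ1 hκ2.le (sq_nonneg _) (sq_nonneg _) hcs
    (mul_nonneg Edisp_nonneg Edisp_nonneg) hprod (Edisp_mul_Edisp_of_add_eq hκ1.le hκ2.le hres)
  rw [div_pow, mul_pow, mul_comm (‖w‖ ^ 2)]
  exact div_le_one_sub_div_of_mul_sq_le hκ1 hκ2.le (sq_nonneg _) (sq_nonneg _) hcos

/-- If `w ≠ 0` satisfies `E(p+w) = E(p) + E(w)` with `p ≠ 0`, then the angle θ
between `w` and `p` satisfies
`sin² θ ≥ (2κ2|p|² + κ2|w|²)/(κ1 + 2κ2|p|² + 2κ2|w|²)`. -/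
theorem resonance_sin_sq_bound (κ1 κ2 : ℝ) (hκ1 : 0 < κ1) (hκ2 : 0 < κ2)
    (p w : EuclideanSpace ℝ (Fin 3)) (hp : p ≠ 0) (hw : w ≠ 0)
    (hres : Edisp κ1 κ2 (p + w) = Edisp κ1 κ2 p + Edisp κ1 κ2 w) :
    (2 * κ2 * ‖p‖ ^ 2 + κ2 * ‖w‖ ^ 2) /
        (κ1 + 2 * κ2 * ‖p‖ ^ 2 + 2 * κ2 * ‖w‖ ^ 2) ≤
      1 - ((inner ℝ w p : ℝ) / (‖w‖ * ‖p‖)) ^ 2 :=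
  resonance_sin_sq_bound_general κ1 κ2 hκ1 hκ2 p w hres
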